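/- For a random variable X with BSN(α,β) density, E[ln Φ(X)] = -(1/B(α,β)) Σ_{n=1}^∞ B(α, n+β)/n. -/

import Mathlib

open Real Filter Set MeasureTheory Topology

noncomputable def phi (z : ℝ) : ℝ := Real.exp (-z^2/2) / Real.sqrt (2*Real.pi)
noncomputable def Phi (z : ℝ) : ℝ := ∫ t in Set.Iic z, phi t
noncomputable def betaF (a b : ℝ) : ℝ := ∫ w in (0:ℝ)..1, w^(a-1) * (1-w)^(b-1)
noncomputable def bsn (a b z : ℝ) : ℝ := phi z * Phi z ^ (a-1) * (1 - Phi z) ^ (b-1) / betaF a b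

lemma phi_pos (x : ℝ) : 0 < phi x := by
  have h := Real.pi_pos
  unfold phi
  positivity

lemma phi_cont : Continuous phi := by
  unfold phi; fun_prop

lemma phi_eq (x : ℝ) : phi x = Real.exp (-(1/2) * x^2) / Real.sqrt (2*Real.pi) := by
  unfold phi; rw [show -x^2/2 = -(1/2) * x^2 by ring]

lemma phi_integrable : Integrable phi := by
  have h : Integrable (fun x : ℝ => Real.exp (-(1/2:ℝ) * x^2)) :=
    integrable_exp_neg_mul_sq (by norm_num)
  have h2 := h.div_const (Real.sqrt (2*Real.pi))
  exact h2.congr (by filter_upwards with x using (phi_eq x).symm)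

lemma phi_integral : ∫ x, phi x = 1 := by
  have h : ∫ x : ℝ, Real.exp (-(1/2:ℝ) * x^2) = Real.sqrt (2*Real.pi) := by
    rw [show (-(1/2:ℝ)) = -(1/2) by norm_num, integral_gaussian]; rw [show ((π:ℝ)/(1/2)) = 2*π by ring]
  have hs : Real.sqrt (2*Real.pi) ≠ 0 := by
    have := Real.pi_pos; positivity
  simp_rw [phi_eq]
  rw [integral_div, h, div_self hs]

lemma Phi_hasDerivAt (x : ℝ) : HasDerivAt Phi (phi x) x := by
  have h : Phi = fun z => Phi 0 + ∫ t in (0:ℝ)..z, phi t := by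
    funext z
    have := intervalIntegral.integral_Iic_sub_Iic (phi_integrable.integrableOn)
      (phi_integrable.integrableOn) (a := (0:ℝ)) (b := z) (f := phi) (μ := volume)
    unfold Phi; linarith
  rw [h]
  simpa using ((phi_cont.integral_hasStrictDerivAt 0 x).hasDerivAt.const_add (Phi 0))

lemma Phi_cont : Continuous Phi :=
  continuous_iff_continuousAt.2 fun x => (Phi_hasDerivAt x).continuousAt

lemma Phi_mono : StrictMono Phi :=
  strictMono_of_deriv_pos fun x => by rw [(Phi_hasDerivAt x).deriv]; exact phi_pos x

lemma Phi_tendsto_atTop : Tendsto Phi atTop (𝓝 1) := by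
  have h := (MeasureTheory.aecover_Iic (tendsto_id (α := ℝ))
    (μ := (volume : Measure ℝ))).integral_tendsto_of_countably_generated phi_integrable
  rwa [phi_integral] at h

lemma Phi_tendsto_atBot : Tendsto Phi atBot (𝓝 0) := by
  have h := (MeasureTheory.aecover_Ioi (tendsto_id (α := ℝ)) (l := atBot)
    (μ := (volume : Measure ℝ))).integral_tendsto_of_countably_generated phi_integrable
  rw [phi_integral] at h
  have heq : ∀ z : ℝ, Phi z = 1 - ∫ x in Ioi z, phi x := by
    intro z
    have := intervalIntegral.integral_Iic_add_Ioi (b := z)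
      (phi_integrable.integrableOn) (phi_integrable.integrableOn) (μ := volume)
    rw [phi_integral] at this
    unfold Phi; linarith
  rw [funext heq]
  simpa using (tendsto_const_nhds (x := (1:ℝ)) (f := atBot)).sub h

lemma Phi_mem (x : ℝ) : Phi x ∈ Ioo (0:ℝ) 1 := by
  constructor
  · have h0 : 0 ≤ Phi (x-1) := by
      unfold Phi
      exact setIntegral_nonneg measurableSet_Iic fun t _ => (phi_pos t).le
    exact lt_of_le_of_lt h0 (Phi_mono (by linarith))
  · have h1 : Phi (x+1) ≤ 1 :=
      Phi_mono.monotone.ge_of_tendsto Phi_tendsto_atTop (x+1)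
    exact lt_of_lt_of_le (Phi_mono (by linarith)) h1

lemma Phi_range : range Phi = Ioo (0:ℝ) 1 := by
  apply Subset.antisymm
  · rintro _ ⟨x, rfl⟩; exact Phi_mem x
  · intro y hy
    obtain ⟨x₁, hx₁⟩ := (Phi_tendsto_atBot.eventually_lt_const hy.1).exists
    obtain ⟨x₂, hx₂⟩ := (Phi_tendsto_atTop.eventually_const_lt hy.2).exists
    have hle : x₁ ≤ x₂ := le_of_lt (Phi_mono.lt_iff_lt.1 (hx₁.trans hx₂))
    obtain ⟨x, _, hx⟩ := intermediate_value_Icc hle Phi_cont.continuousOn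
      ⟨hx₁.le, hx₂.le⟩
    exact ⟨x, hx⟩


lemma betaIntegrable {c d : ℝ} (hc : 0 < c) (hd : 0 < d) :
    IntegrableOn (fun w : ℝ => w^(c-1) * (1-w)^(d-1)) (Ioo 0 1) volume := by
  have hC : IntervalIntegrable (fun x : ℝ => (x:ℂ)^((c:ℂ)-1) * ((1:ℂ)-x)^((d:ℂ)-1))
      volume 0 1 := Complex.betaIntegral_convergent (by simpa using hc) (by simpa using hd)
  have hC' : IntegrableOn (fun x : ℝ => (x:ℂ)^((c:ℂ)-1) * ((1:ℂ)-x)^((d:ℂ)-1))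
      (Ioo 0 1) volume := by
    have := (intervalIntegrable_iff_integrableOn_Ioc_of_le (by norm_num : (0:ℝ) ≤ 1)).1 hC
    exact this.mono_set Ioo_subset_Ioc_self
  have hre : IntegrableOn (fun x : ℝ => ((x:ℂ)^((c:ℂ)-1) * ((1:ℂ)-x)^((d:ℂ)-1)).re)
      (Ioo 0 1) volume := hC'.re
  apply hre.congr_fun _ measurableSet_Ioo
  intro x hx
  have h1 : ((x:ℂ))^((c:ℂ)-1) = ((x^(c-1) : ℝ) : ℂ) := by
    rw [Complex.ofReal_cpow hx.1.le]; push_cast; ring_nf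
  have h2 : ((1:ℂ)-x)^((d:ℂ)-1) = (((1-x)^(d-1) : ℝ) : ℂ) := by
    rw [Complex.ofReal_cpow (by linarith [hx.2] : (0:ℝ) ≤ 1 - x)]; push_cast; ring_nf
  simp only
  rw [h1, h2, ← Complex.ofReal_mul, Complex.ofReal_re]



lemma log_bound {a : ℝ} (ha : 0 < a) {w : ℝ} (hw : 0 < w) :
    -Real.log w ≤ (2/a) * w^(-(a/2)) := by
  have h1 : Real.log (w^(-(a/2))) ≤ w^(-(a/2)) - 1 :=
    Real.log_le_sub_one_of_pos (Real.rpow_pos_of_pos hw _)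
  rw [Real.log_rpow hw] at h1
  have h2 : -(a/2) * Real.log w ≤ w^(-(a/2)) := by linarith
  calc -Real.log w = (2/a) * (-(a/2) * Real.log w) := by field_simp
    _ ≤ (2/a) * w^(-(a/2)) := mul_le_mul_of_nonneg_left h2 (by positivity)

lemma series_eq (a b : ℝ) (ha : 0 < a) (hb : 0 < b) :
    ∫ w in Ioo (0:ℝ) 1, w^(a-1) * (1-w)^(b-1) * Real.log w
      = -∑' n : ℕ, betaF a ((n:ℝ)+1+b) / ((n:ℝ)+1) := by
  set F : ℕ → ℝ → ℝ := fun n w => w^(a-1) * (1-w)^(b-1) * ((1-w)^(n+1) / ((n:ℝ)+1)) with hFdef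
  have hF : ∀ w ∈ Ioo (0:ℝ) 1, HasSum (fun n => F n w)
      (-(w^(a-1) * (1-w)^(b-1) * Real.log w)) := by
    intro w hw
    have h := hasSum_pow_div_log_of_abs_lt_one (x := 1-w)
      (abs_lt.2 ⟨by linarith [hw.2], by linarith [hw.1]⟩)
    simp only [sub_sub_cancel] at h
    have h2 := h.mul_left (w^(a-1) * (1-w)^(b-1))
    rw [show -(w^(a-1) * (1-w)^(b-1) * Real.log w)
        = w^(a-1) * (1-w)^(b-1) * -Real.log w by ring]
    exact h2
  have hFnn : ∀ n : ℕ, ∀ w ∈ Ioo (0:ℝ) 1, 0 ≤ F n w := by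
    intro n w hw
    have h1 : (0:ℝ) ≤ w := hw.1.le
    have h2 : (0:ℝ) ≤ 1 - w := by linarith [hw.2]
    have := Real.rpow_nonneg h1 (a-1)
    have := Real.rpow_nonneg h2 (b-1)
    have : (0:ℝ) ≤ (1-w)^(n+1) := pow_nonneg h2 _
    positivity
  have hmeas : ∀ n : ℕ, AEStronglyMeasurable (F n) (volume.restrict (Ioo 0 1)) := by
    intro n
    apply Measurable.aestronglyMeasurable
    fun_prop
  have key : ∑' n : ℕ, ∫⁻ w in Ioo (0:ℝ) 1, (‖F n w‖₊ : ENNReal) ≠ ⊤ := by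
    rw [← MeasureTheory.lintegral_tsum (fun n => (hmeas n).nnnorm.aemeasurable.coe_nnreal_ennreal)]
    have hb1 : ∀ w ∈ Ioo (0:ℝ) 1, (∑' n : ℕ, (‖F n w‖₊ : ENNReal))
        ≤ ENNReal.ofReal ((2/a) * (w^(a/2-1) * (1-w)^(b-1))) := by
      intro w hw
      have h1w : (0:ℝ) < 1 - w := by linarith [hw.2]
      have hnn := fun n => hFnn n w hw
      have heq : ∀ n : ℕ, (‖F n w‖₊ : ENNReal) = ENNReal.ofReal (F n w) :=
        fun n => Real.enorm_eq_ofReal (hnn n)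
      simp_rw [heq]
      rw [← ENNReal.ofReal_tsum_of_nonneg hnn (hF w hw).summable, (hF w hw).tsum_eq]
      apply ENNReal.ofReal_le_ofReal
      have hc : (0:ℝ) ≤ w^(a-1) * (1-w)^(b-1) :=
        mul_nonneg (Real.rpow_nonneg hw.1.le _) (Real.rpow_nonneg h1w.le _)
      calc -(w^(a-1) * (1-w)^(b-1) * Real.log w)
          = w^(a-1) * (1-w)^(b-1) * (-Real.log w) := by ring
        _ ≤ w^(a-1) * (1-w)^(b-1) * ((2/a) * w^(-(a/2))) :=
            mul_le_mul_of_nonneg_left (log_bound ha hw.1) hc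
        _ = (2/a) * ((w^(a-1) * w^(-(a/2))) * (1-w)^(b-1)) := by ring
        _ = (2/a) * (w^(a/2-1) * (1-w)^(b-1)) := by
            rw [← Real.rpow_add hw.1]; ring_nf
    have hint : Integrable (fun w : ℝ => (2/a) * (w^(a/2-1) * (1-w)^(b-1)))
        (volume.restrict (Ioo 0 1)) := by
      have := (betaIntegrable (half_pos ha) hb).const_mul (2/a)
      simpa [mul_assoc] using this
    have hfin : ∫⁻ w in Ioo (0:ℝ) 1,
        ENNReal.ofReal ((2/a) * (w^(a/2-1) * (1-w)^(b-1))) < ⊤ := hint.lintegral_lt_top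
    refine ne_of_lt (lt_of_le_of_lt ?_ hfin)
    apply lintegral_mono_ae
    exact (ae_restrict_iff' measurableSet_Ioo).2 (Eventually.of_forall hb1)
  have hInt : ∀ n : ℕ, ∫ w in Ioo (0:ℝ) 1, F n w = betaF a ((n:ℝ)+1+b) / ((n:ℝ)+1) := by
    intro n
    have h1 : EqOn (F n) (fun w => (w^(a-1) * (1-w)^(((n:ℝ)+1+b)-1)) / ((n:ℝ)+1))
        (Ioo (0:ℝ) 1) := by
      intro w hw
      have h1w : (0:ℝ) < 1 - w := by linarith [hw.2]
      have hpow : (1-w)^(b-1) * (1-w)^(n+1) = (1-w)^(((n:ℝ)+1+b)-1) := by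
        rw [← Real.rpow_natCast (1-w) (n+1), ← Real.rpow_add h1w]
        push_cast; ring_nf
      simp only [hFdef]
      rw [← hpow]; ring
    rw [setIntegral_congr_fun measurableSet_Ioo h1, integral_div]
    congr 1
    unfold betaF
    rw [intervalIntegral.integral_of_le (by norm_num : (0:ℝ) ≤ 1),
      MeasureTheory.integral_Ioc_eq_integral_Ioo]
  have hex := MeasureTheory.integral_tsum hmeas key
  have hL : ∫ w in Ioo (0:ℝ) 1, (∑' n, F n w)
      = ∫ w in Ioo (0:ℝ) 1, -(w^(a-1) * (1-w)^(b-1) * Real.log w) :=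
    setIntegral_congr_fun measurableSet_Ioo (fun w hw => (hF w hw).tsum_eq)
  rw [hL, integral_neg] at hex
  rw [tsum_congr hInt] at hex
  linarith
theorem bsn_elog_Phi (a b : ℝ) (ha : 0 < a) (hb : 0 < b) :
    ∫ x : ℝ, bsn a b x * Real.log (Phi x) =
      -(1 / betaF a b) * ∑' n : ℕ, betaF a ((n:ℝ) + 1 + b) / ((n:ℝ) + 1) := by
  set g : ℝ → ℝ := fun w => w^(a-1) * (1-w)^(b-1) * Real.log w / betaF a b with hg
  have hsub := MeasureTheory.integral_image_eq_integral_abs_deriv_smul (f := Phi)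
    (f' := phi) MeasurableSet.univ (fun x _ => (Phi_hasDerivAt x).hasDerivWithinAt)
    (Phi_mono.injective.injOn) g
  rw [image_univ, Phi_range, MeasureTheory.setIntegral_univ] at hsub
  have h1 : (fun x : ℝ => |phi x| • g (Phi x))
      = fun x : ℝ => bsn a b x * Real.log (Phi x) := by
    funext x
    rw [abs_of_pos (phi_pos x), smul_eq_mul]
    unfold bsn; simp only [hg]; ring
  rw [h1] at hsub
  rw [← hsub, hg]
  simp only
  rw [MeasureTheory.integral_div, series_eq a b ha hb]
  ring
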